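/- arXiv:1608.06081 — 4 statements merged into one kernel-verified Lean document; each statement's English description precedes it below -/
import Mathlib

section
/- Let m₀, μ, H, k₂, L > 0 and choose θ with (m₀ + μH)/(m₀ + μH + μk₂/2) < θ < 1. Then for all vectors (in a real inner product space) e, q, s, c, β with ‖q‖ ≤ ‖β‖ (interpreted componentwise via norms), the quantity m₀‖e − q‖² + μH‖s − q‖² + μL²‖c‖² + μk₂‖β‖² is bounded below by C(‖e‖² + ‖q‖² + ‖s‖² + ‖c‖² + ‖β‖²) for some constant C > 0 depending only on θ, m₀, μ, H, k₂, L. -/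
/-!
Young's inequality `2ab ≤ θa² + θ⁻¹b²` gives `‖e - q‖² ≥ (1 - θ)‖e‖² - (θ⁻¹ - 1)‖q‖²`, and likewise for
`‖s - q‖²`. The negative `‖q‖²` terms are absorbed by half of `μk₂‖β‖² ≥ μk₂/2 (‖β‖² + ‖q‖²)`; the lower
bound on `θ` is exactly what leaves a positive coefficient `μk₂/2 - (θ⁻¹ - 1)(m₀ + μH)` in front of `‖q‖²`.
-/

theorem sq_sub_ge_young {θ : ℝ} (hθ : 0 < θ) (x y : ℝ) :
    (1 - θ) * x ^ 2 - (θ⁻¹ - 1) * y ^ 2 ≤ (x - y) ^ 2 := by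
  have key : θ * ((x - y) ^ 2 - ((1 - θ) * x ^ 2 - (θ⁻¹ - 1) * y ^ 2)) = (θ * x - y) ^ 2 := by
    field_simp
    ring
  have := (mul_nonneg_iff_of_pos_left hθ).mp (key ▸ sq_nonneg _)
  linarith

theorem norm_sub_sq_ge_young {E : Type*} [SeminormedAddCommGroup E] {θ : ℝ} (hθ : 0 < θ)
    (x y : E) : (1 - θ) * ‖x‖ ^ 2 - (θ⁻¹ - 1) * ‖y‖ ^ 2 ≤ ‖x - y‖ ^ 2 :=
  (sq_sub_ge_young hθ _ _).trans <| sq_le_sq.mpr <| by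
    rw [abs_norm]
    exact abs_norm_sub_norm_le x y

theorem inv_sub_one_mul_lt_of_div_add_lt {A B θ : ℝ} (hA : 0 < A) (hB : 0 < B)
    (h : A / (A + B) < θ) : (θ⁻¹ - 1) * A < B := by
  have hθ : 0 < θ := (div_pos hA (add_pos hA hB)).trans h
  rw [div_lt_iff₀ (add_pos hA hB)] at h
  have : (θ⁻¹ - 1) * A = (A - θ * A) / θ := by field_simp
  rw [this, div_lt_iff₀ hθ]
  linarith

theorem stmt_9_general {E : Type*} [NormedAddCommGroup E]
    (m₀ μ H k₂ L θ : ℝ) (hm₀ : 0 < m₀) (hμ : 0 < μ) (hH : 0 < H) (hk₂ : 0 < k₂) (hL : 0 < L)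
    (hθl : (m₀ + μ * H) / (m₀ + μ * H + μ * k₂ / 2) < θ) (hθr : θ < 1) :
    ∃ C : ℝ, 0 < C ∧ ∀ e q s c β : E, ‖q‖ ≤ ‖β‖ →
      m₀ * ‖e - q‖ ^ 2 + μ * H * ‖s - q‖ ^ 2 + μ * L ^ 2 * ‖c‖ ^ 2 + μ * k₂ * ‖β‖ ^ 2 ≥
        C * (‖e‖ ^ 2 + ‖q‖ ^ 2 + ‖s‖ ^ 2 + ‖c‖ ^ 2 + ‖β‖ ^ 2) := by
  have hθ : 0 < θ := (div_pos (by positivity) (by positivity)).trans hθl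
  set κ := μ * k₂ / 2 - (θ⁻¹ - 1) * (m₀ + μ * H) with hκ_def
  have hκ : 0 < κ := 
    sub_pos.mpr (inv_sub_one_mul_lt_of_div_add_lt (by positivity) (by positivity) hθl)
  set C := min ((1 - θ) * m₀) (min κ (min ((1 - θ) * (μ * H)) (min (μ * L ^ 2) (μ * k₂ / 2))))
  have h1θ : 0 < 1 - θ := sub_pos.mpr hθr
  refine ⟨C, lt_min (by positivity) (lt_min hκ (lt_min (by positivity) (by positivity))), ?_⟩
  intro e q s c β hqβ
  have he := mul_le_mul_of_nonneg_left (norm_sub_sq_ge_young hθ e q) hm₀.le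
  have hs := mul_le_mul_of_nonneg_left (norm_sub_sq_ge_young hθ s q) (by positivity : 0 ≤ μ * H)
  have hβ := mul_le_mul_of_nonneg_left (pow_le_pow_left₀ (norm_nonneg q) hqβ 2)
    (by positivity : 0 ≤ μ * k₂ / 2)
  calc C * (‖e‖ ^ 2 + ‖q‖ ^ 2 + ‖s‖ ^ 2 + ‖c‖ ^ 2 + ‖β‖ ^ 2)
      ≤ (1 - θ) * m₀ * ‖e‖ ^ 2 + κ * ‖q‖ ^ 2 + (1 - θ) * (μ * H) * ‖s‖ ^ 2
          + μ * L ^ 2 * ‖c‖ ^ 2 + μ * k₂ / 2 * ‖β‖ ^ 2 := by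
        rw [mul_add, mul_add, mul_add, mul_add]
        gcongr <;> simp [C]
    _ ≤ _ := by
        rw [hκ_def]
        linarith

theorem stmt_9 {E : Type*} [NormedAddCommGroup E] [InnerProductSpace ℝ E]
    (m₀ μ H k₂ L θ : ℝ) (hm₀ : 0 < m₀) (hμ : 0 < μ) (hH : 0 < H) (hk₂ : 0 < k₂) (hL : 0 < L)
    (hθl : (m₀ + μ * H) / (m₀ + μ * H + μ * k₂ / 2) < θ) (hθr : θ < 1) :
    ∃ C : ℝ, 0 < C ∧ ∀ e q s c β : E, ‖q‖ ≤ ‖β‖ →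
      m₀ * ‖e - q‖ ^ 2 + μ * H * ‖s - q‖ ^ 2 + μ * L ^ 2 * ‖c‖ ^ 2 + μ * k₂ * ‖β‖ ^ 2 ≥
        C * (‖e‖ ^ 2 + ‖q‖ ^ 2 + ‖s‖ ^ 2 + ‖c‖ ^ 2 + ‖β‖ ^ 2) :=
  stmt_9_general m₀ μ H k₂ L θ hm₀ hμ hH hk₂ hL hθl hθr
end

section
/- Assume the incompatible Korn inequality: there is C_K > 0 such that ‖X‖²_{L²} ≤ C_K(‖sym X‖²_{L²} + ‖Curl X‖²_{L²}) for all X in Q := H₀(Curl; Ω, Γ_D, ℝ^{3×3}). Then the map ‖(q, X)‖²_* := ‖q − X‖²_{L²} + ‖sym q‖²_{L²} + ‖Curl X‖²_{L²} defines a norm on P × Q, where P = L²(Ω, sl(3)). In particular, if ‖(q,X)‖_* = 0 then q = 0 and X = 0. -/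
/-!
The functional is `‖T (q, X)‖` for the linear map `T (q, X) = (q - X, sym q, Curl X)` into the
`ℓ²`-product `L² × L² × L²`, so homogeneity and the triangle inequality are inherited from that
product norm. Definiteness is injectivity of `T`: `T (q, X) = 0` forces `q = X` with
`sym X = 0` and `Curl X = 0`, and the Korn inequality then gives `X = 0`.
-/

noncomputable section

namespace LinearMap

variable {E F G : Type*} [AddCommGroup E] [Module ℝ E]
  [SeminormedAddCommGroup F] [Module ℝ F] [SeminormedAddCommGroup G] [Module ℝ G]

def prodL2 (f : E →ₗ[ℝ] F) (g : E →ₗ[ℝ] G) : E →ₗ[ℝ] WithLp 2 (F × G) :=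
  (WithLp.linearEquiv 2 ℝ (F × G)).symm.toLinearMap ∘ₗ f.prod g

theorem norm_prodL2_apply (f : E →ₗ[ℝ] F) (g : E →ₗ[ℝ] G) (x : E) :
    ‖f.prodL2 g x‖ = √(‖f x‖ ^ 2 + ‖g x‖ ^ 2) :=
  WithLp.prod_norm_eq_of_L2 _

end LinearMap

section Korn

variable {V W Q : Type*} [NormedAddCommGroup V] [Module ℝ V] [NormedAddCommGroup W] [Module ℝ W]
  [AddCommGroup Q] [Module ℝ Q]

def starMap (ι : Q →ₗ[ℝ] V) (symL : V →ₗ[ℝ] V) (curl : Q →ₗ[ℝ] W) :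
    V × Q →ₗ[ℝ] WithLp 2 (WithLp 2 (V × V) × W) :=
  ((LinearMap.fst ℝ V Q - ι ∘ₗ LinearMap.snd ℝ V Q).prodL2 (symL ∘ₗ LinearMap.fst ℝ V Q)).prodL2
    (curl ∘ₗ LinearMap.snd ℝ V Q)

theorem norm_starMap_apply (ι : Q →ₗ[ℝ] V) (symL : V →ₗ[ℝ] V) (curl : Q →ₗ[ℝ] W)
    (q : V) (X : Q) :
    ‖starMap ι symL curl (q, X)‖ = √(‖q - ι X‖ ^ 2 + ‖symL q‖ ^ 2 + ‖curl X‖ ^ 2) := by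
  rw [starMap, LinearMap.norm_prodL2_apply, LinearMap.norm_prodL2_apply,
    Real.sq_sqrt (by positivity)]
  rfl

theorem eq_zero_of_korn {ι : Q →ₗ[ℝ] V} (hι : Function.Injective ι) {symL : V →ₗ[ℝ] V}
    {curl : Q →ₗ[ℝ] W} {C_K : ℝ}
    (hKorn : ∀ X : Q, ‖ι X‖ ^ 2 ≤ C_K * (‖symL (ι X)‖ ^ 2 + ‖curl X‖ ^ 2)) {X : Q}
    (hsym : symL (ι X) = 0) (hcurl : curl X = 0) : X = 0 := by
  have hιX : ι X = 0 := by simpa [hsym, hcurl] using hKorn X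
  exact (injective_iff_map_eq_zero ι).mp hι X hιX

theorem starMap_injective {ι : Q →ₗ[ℝ] V} (hι : Function.Injective ι) {symL : V →ₗ[ℝ] V}
    {curl : Q →ₗ[ℝ] W} {C_K : ℝ}
    (hKorn : ∀ X : Q, ‖ι X‖ ^ 2 ≤ C_K * (‖symL (ι X)‖ ^ 2 + ‖curl X‖ ^ 2)) :
    Function.Injective (starMap ι symL curl) := by
  refine (injective_iff_map_eq_zero _).mpr fun ⟨q, X⟩ h => ?_
  have hzero := norm_eq_zero.mpr h
  rw [norm_starMap_apply, Real.sqrt_eq_zero (by positivity),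
    add_eq_zero_iff_of_nonneg (by positivity) (by positivity),
    add_eq_zero_iff_of_nonneg (by positivity) (by positivity)] at hzero
  obtain ⟨⟨hdiff, hsymq⟩, hcurl⟩ := hzero
  have hq : q = ι X := sub_eq_zero.mp (by simpa using hdiff)
  have hsym : symL (ι X) = 0 := by simpa [hq] using hsymq
  replace hcurl : curl X = 0 := by simpa using hcurl
  have hX := eq_zero_of_korn hι hKorn hsym hcurl
  simp [hq, hX]

end Korn

theorem stmt_10_general {V W Q : Type*}
    [NormedAddCommGroup V] [InnerProductSpace ℝ V]
    [NormedAddCommGroup W] [InnerProductSpace ℝ W]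
    [NormedAddCommGroup Q] [InnerProductSpace ℝ Q]
    (ι : Q →ₗ[ℝ] V) (hι : Function.Injective ι)
    (symL : V →ₗ[ℝ] V) (curl : Q →ₗ[ℝ] W)
    (C_K : ℝ)
    (hKorn : ∀ X : Q, ‖ι X‖ ^ 2 ≤ C_K * (‖symL (ι X)‖ ^ 2 + ‖curl X‖ ^ 2)) :
    -- ‖(q,X)‖_* := √(‖q − X‖² + ‖sym q‖² + ‖Curl X‖²) is a norm on P × Q:
    (∀ q : V, ∀ X : Q,
        Real.sqrt (‖q - ι X‖ ^ 2 + ‖symL q‖ ^ 2 + ‖curl X‖ ^ 2) = 0 ↔ q = 0 ∧ X = 0) ∧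
    (∀ (a : ℝ) (q : V) (X : Q),
        Real.sqrt (‖a • q - ι (a • X)‖ ^ 2 + ‖symL (a • q)‖ ^ 2 + ‖curl (a • X)‖ ^ 2) =
          |a| * Real.sqrt (‖q - ι X‖ ^ 2 + ‖symL q‖ ^ 2 + ‖curl X‖ ^ 2)) ∧
    (∀ (q q' : V) (X X' : Q),
        Real.sqrt (‖(q + q') - ι (X + X')‖ ^ 2 + ‖symL (q + q')‖ ^ 2 + ‖curl (X + X')‖ ^ 2) ≤
          Real.sqrt (‖q - ι X‖ ^ 2 + ‖symL q‖ ^ 2 + ‖curl X‖ ^ 2) +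
            Real.sqrt (‖q' - ι X'‖ ^ 2 + ‖symL q'‖ ^ 2 + ‖curl X'‖ ^ 2)) := by
  set T := starMap ι symL curl
  have hT : Function.Injective T := starMap_injective hι hKorn
  refine ⟨fun q X => ?_, fun a q X => ?_, fun q q' X X' => ?_⟩
  · rw [← norm_starMap_apply, norm_eq_zero, map_eq_zero_iff T hT, Prod.mk_eq_zero]
  · rw [← norm_starMap_apply, ← norm_starMap_apply, ← Prod.smul_mk, map_smul, norm_smul,
      Real.norm_eq_abs]
  · rw [← norm_starMap_apply, ← norm_starMap_apply, ← norm_starMap_apply, ← Prod.mk_add_mk,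
      map_add]
    exact norm_add_le _ _

/-- Abstract formalization: `V` plays the role of `L²(Ω, ℝ^{3×3})` (containing
`P = L²(Ω, sl(3))` as the ambient space of the `q`-variable), `Q` the role of
`H₀(Curl; Ω, Γ_D, ℝ^{3×3})` with inclusion `ι : Q → V`, `symL` the pointwise
symmetric part and `curl` the row-wise Curl. -/
theorem stmt_10 {V W Q : Type*}
    [NormedAddCommGroup V] [InnerProductSpace ℝ V]
    [NormedAddCommGroup W] [InnerProductSpace ℝ W]
    [NormedAddCommGroup Q] [InnerProductSpace ℝ Q]
    (ι : Q →ₗ[ℝ] V) (hι : Function.Injective ι)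
    (symL : V →ₗ[ℝ] V) (curl : Q →ₗ[ℝ] W)
    (C_K : ℝ) (hCK : 0 < C_K)
    (hKorn : ∀ X : Q, ‖ι X‖ ^ 2 ≤ C_K * (‖symL (ι X)‖ ^ 2 + ‖curl X‖ ^ 2)) :
    -- ‖(q,X)‖_* := √(‖q − X‖² + ‖sym q‖² + ‖Curl X‖²) is a norm on P × Q:
    (∀ q : V, ∀ X : Q,
        Real.sqrt (‖q - ι X‖ ^ 2 + ‖symL q‖ ^ 2 + ‖curl X‖ ^ 2) = 0 ↔ q = 0 ∧ X = 0) ∧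
    (∀ (a : ℝ) (q : V) (X : Q),
        Real.sqrt (‖a • q - ι (a • X)‖ ^ 2 + ‖symL (a • q)‖ ^ 2 + ‖curl (a • X)‖ ^ 2) =
          |a| * Real.sqrt (‖q - ι X‖ ^ 2 + ‖symL q‖ ^ 2 + ‖curl X‖ ^ 2)) ∧
    (∀ (q q' : V) (X X' : Q),
        Real.sqrt (‖(q + q') - ι (X + X')‖ ^ 2 + ‖symL (q + q')‖ ^ 2 + ‖curl (X + X')‖ ^ 2) ≤
          Real.sqrt (‖q - ι X‖ ^ 2 + ‖symL q‖ ^ 2 + ‖curl X‖ ^ 2) +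
            Real.sqrt (‖q' - ι X'‖ ^ 2 + ‖symL q'‖ ^ 2 + ‖curl X'‖ ^ 2)) :=
  stmt_10_general ι hι symL curl C_K hKorn
end
end

section
/- Under the assumed incompatible Korn inequality ‖X‖²_{L²} ≤ C_K(‖sym X‖²_{L²} + ‖Curl X‖²_{L²}) on Q = H₀(Curl; Ω, Γ_D, ℝ^{3×3}), the space P × Q with P = L²(Ω, sl(3)) equipped with the norm ‖(q,X)‖²_* = ‖q − X‖²_{L²} + ‖sym q‖²_{L²} + ‖Curl X‖²_{L²} is complete; consequently, by the open mapping theorem, ‖·‖_* is equivalent on P × Q to the standard norm ‖(q,X)‖² = ‖q‖²_{L²} + ‖X‖²_{H(Curl)}. -/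
noncomputable section
set_option maxHeartbeats 1000000

/-- Abstract formalization: `V` ≈ `L²(Ω, ℝ^{3×3})`, `Q` ≈ `H₀(Curl; Ω, Γ_D, ℝ^{3×3})`
with its `H(Curl)` norm (hypothesis `hQnorm`), `ι` the inclusion, `symL` the pointwise
symmetric part, `curl` the row-wise Curl.  Under the incompatible Korn inequality, the
norm `‖(q,X)‖²_* = ‖q − X‖² + ‖sym q‖² + ‖Curl X‖²` is equivalent to the standard norm
`‖q‖²_{L²} + ‖X‖²_{H(Curl)}` on `P × Q` (completeness + open mapping theorem). -/
theorem stmt_11 {V W Q : Type*}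
    [NormedAddCommGroup V] [InnerProductSpace ℝ V] [CompleteSpace V]
    [NormedAddCommGroup W] [InnerProductSpace ℝ W] [CompleteSpace W]
    [NormedAddCommGroup Q] [InnerProductSpace ℝ Q] [CompleteSpace Q]
    (ι : Q →L[ℝ] V) (hι : Function.Injective ι)
    (symL : V →L[ℝ] V) (curl : Q →L[ℝ] W)
    (hQnorm : ∀ X : Q, ‖X‖ ^ 2 = ‖ι X‖ ^ 2 + ‖curl X‖ ^ 2)
    (C_K : ℝ) (hCK : 0 < C_K)
    (hKorn : ∀ X : Q, ‖ι X‖ ^ 2 ≤ C_K * (‖symL (ι X)‖ ^ 2 + ‖curl X‖ ^ 2)) :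
    ∃ c C : ℝ, 0 < c ∧ 0 < C ∧ ∀ (q : V) (X : Q),
      c * (‖q‖ ^ 2 + ‖X‖ ^ 2) ≤ ‖q - ι X‖ ^ 2 + ‖symL q‖ ^ 2 + ‖curl X‖ ^ 2 ∧
      ‖q - ι X‖ ^ 2 + ‖symL q‖ ^ 2 + ‖curl X‖ ^ 2 ≤ C * (‖q‖ ^ 2 + ‖X‖ ^ 2) := by
  set M := ‖symL‖ with hM
  have hM0 : 0 ≤ M := norm_nonneg _
  set A := C_K * (3 + 2 * M ^ 2) with hA
  have hA0 : 0 < A := by positivity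
  refine ⟨1 / (3 * A + 3), 3 + M ^ 2, by positivity, by positivity, fun q X => ?_⟩
  have hQn := hQnorm X
  have hιX : ‖ι X‖ ^ 2 ≤ ‖X‖ ^ 2 := by nlinarith [sq_nonneg ‖curl X‖]
  have hcX : ‖curl X‖ ^ 2 ≤ ‖X‖ ^ 2 := by nlinarith [sq_nonneg ‖ι X‖]
  have hsymq : ‖symL q‖ ≤ M * ‖q‖ := symL.le_opNorm q
  have hsymd : ‖symL (q - ι X)‖ ≤ M * ‖q - ι X‖ := symL.le_opNorm _
  have htri : ‖q‖ ≤ ‖q - ι X‖ + ‖ι X‖ := by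
    have h := norm_add_le (q - ι X) (ι X)
    rwa [sub_add_cancel] at h
  have heq : symL (ι X) = symL q - symL (q - ι X) := by simp
  have htri2 : ‖symL (ι X)‖ ≤ ‖symL q‖ + ‖symL (q - ι X)‖ := by
    rw [heq]; exact norm_sub_le _ _
  have hK := hKorn X
  have hsymιX : ‖symL (ι X)‖ ^ 2 ≤ 2 * ‖symL q‖ ^ 2 + 2 * (M * ‖q - ι X‖) ^ 2 := by
    nlinarith [norm_nonneg (symL (ι X)), norm_nonneg (symL q),
      norm_nonneg (symL (q - ι X)), sq_nonneg (‖symL q‖ - M * ‖q - ι X‖)]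
  have hq2 : ‖q‖ ^ 2 ≤ 2 * ‖q - ι X‖ ^ 2 + 2 * ‖ι X‖ ^ 2 := by
    have h := mul_self_le_mul_self (norm_nonneg q) htri
    nlinarith [sq_nonneg (‖q - ι X‖ - ‖ι X‖)]
  have hD2' : ‖q - ι X‖ ^ 2 ≤ 2 * ‖q‖ ^ 2 + 2 * ‖ι X‖ ^ 2 := by
    have hsub : ‖q - ι X‖ ≤ ‖q‖ + ‖ι X‖ := norm_sub_le _ _
    have h := mul_self_le_mul_self (norm_nonneg (q - ι X)) hsub
    nlinarith [sq_nonneg (‖q‖ - ‖ι X‖)]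
  set D := ‖q - ι X‖ ^ 2 with hD
  set S := ‖symL q‖ ^ 2 with hS
  set cc := ‖curl X‖ ^ 2 with hcc
  have hD0 : 0 ≤ D := sq_nonneg _
  have hS0 : 0 ≤ S := sq_nonneg _
  have hc0 : 0 ≤ cc := sq_nonneg _
  have hKornN : ‖ι X‖ ^ 2 ≤ A * (D + S + cc) := by
    have h1 : ‖ι X‖ ^ 2 ≤ C_K * (2 * S + 2 * M ^ 2 * D + cc) := by nlinarith
    rw [hA]
    nlinarith [mul_nonneg hCK.le hD0, mul_nonneg hCK.le hS0, mul_nonneg hCK.le hc0,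
      mul_nonneg (mul_nonneg hCK.le (sq_nonneg M)) hS0,
      mul_nonneg (mul_nonneg hCK.le (sq_nonneg M)) hc0]
  constructor
  · rw [div_mul_eq_mul_div, div_le_iff₀ (by positivity)]
    have hX2 : ‖X‖ ^ 2 ≤ A * (D + S + cc) + cc := by linarith
    nlinarith [hKornN, hq2, mul_nonneg hA0.le hD0, mul_nonneg hA0.le hS0,
      mul_nonneg hA0.le hc0]
  · have hS2 : S ≤ M ^ 2 * ‖q‖ ^ 2 := by nlinarith [norm_nonneg (symL q), norm_nonneg q]
    have hD2 : D ≤ 2 * ‖q‖ ^ 2 + 2 * ‖X‖ ^ 2 := by linarith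
    have hgoal : (3 + M ^ 2) * (‖q‖ ^ 2 + ‖X‖ ^ 2)
        = 3 * ‖q‖ ^ 2 + 3 * ‖X‖ ^ 2 + M ^ 2 * ‖q‖ ^ 2 + M ^ 2 * ‖X‖ ^ 2 := by ring
    rw [hgoal]
    have h0 : 0 ≤ M ^ 2 * ‖X‖ ^ 2 := by positivity
    linarith [sq_nonneg ‖q‖]
end
end

section
/- For the yield set K = {(Σ, g) : ‖dev Σ‖ + g ≤ σ₀, g ≤ 0} with σ₀ > 0, suppose (Σ_E, g) ∈ K with dev Σ_E ≠ 0 and ‖dev Σ_E‖ + g = σ₀, g < 0. If the pair (ε̇, η̇) (with ε̇ ∈ Sym(3) ∩ sl(3), η̇ ∈ ℝ) lies in the normal cone N_K(Σ_E, g), then there exists λ ≥ 0 with ε̇ = λ dev Σ_E/‖dev Σ_E‖ and η̇ = λ = ‖ε̇‖. -/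
open Matrix

noncomputable section

abbrev M3 := Matrix (Fin 3) (Fin 3) ℝ

/-- Frobenius inner product ⟨A,B⟩ = tr(ABᵀ). -/
def frob (A B : M3) : ℝ := (A * Bᵀ).trace

/-- Frobenius norm. -/
def frobNorm (A : M3) : ℝ := Real.sqrt (frob A A)

/-- Deviatoric part dev A = A - (tr A / 3) Id. -/
def dev (A : M3) : M3 := A - (A.trace / 3) • (1 : M3)

/-! Test the normal-cone inequality at points `(SE + A, g')` with `A` traceless, so that
`dev (SE + A) = dev SE + A`. Sliding along the ray through `dev SE` on the face
`‖dev S‖ + g' = σ₀`, which is possible in both directions because `g < 0`, gives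
`ηdot ‖dev SE‖ = ⟨εdot, dev SE⟩`. Replacing `dev SE` by the matrix of the same norm pointing along
`εdot` gives `‖εdot‖ ‖dev SE‖ ≤ ⟨εdot, dev SE⟩`. Hence Cauchy–Schwarz is an equality, which
forces `εdot` to be a nonnegative multiple of `dev SE`, and then `ηdot = ‖εdot‖`. -/

open scoped RealInnerProductSpace

def flatten : M3 →ₗ[ℝ] EuclideanSpace ℝ (Fin 3 × Fin 3) where
  toFun A := WithLp.toLp 2 fun p => A p.1 p.2
  map_add' _ _ := rfl
  map_smul' _ _ := rfl

@[simp]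
lemma flatten_apply (A : M3) (p : Fin 3 × Fin 3) : flatten A p = A p.1 p.2 := rfl

lemma flatten_injective : Function.Injective flatten := by
  intro A B h
  ext i j
  simpa using congrArg (· (i, j)) h

lemma frob_eq_inner (A B : M3) : frob A B = ⟪flatten A, flatten B⟫ := by
  simp [frob, trace, mul_apply, PiLp.inner_apply, Fintype.sum_prod_type, mul_comm]

lemma frobNorm_eq_norm (A : M3) : frobNorm A = ‖flatten A‖ := by
  rw [frobNorm, frob_eq_inner, real_inner_self_eq_norm_sq, Real.sqrt_sq (norm_nonneg _)]

lemma frobNorm_nonneg (A : M3) : 0 ≤ frobNorm A := Real.sqrt_nonneg _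

lemma frob_self (A : M3) : frob A A = frobNorm A ^ 2 := by
  rw [frob_eq_inner, frobNorm_eq_norm, real_inner_self_eq_norm_sq]

lemma frob_smul_right (A B : M3) (c : ℝ) : frob A (c • B) = c * frob A B := by
  simp only [frob_eq_inner, map_smul, inner_smul_right]

lemma frob_sub_right (A B C : M3) : frob A (B - C) = frob A B - frob A C := by
  simp only [frob_eq_inner, map_sub, inner_sub_right]

lemma frobNorm_smul (c : ℝ) (A : M3) : frobNorm (c • A) = |c| * frobNorm A := by
  simp only [frobNorm_eq_norm, map_smul, norm_smul, Real.norm_eq_abs]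

lemma frob_le_frobNorm_mul (A B : M3) : frob A B ≤ frobNorm A * frobNorm B := by
  simpa only [frob_eq_inner, frobNorm_eq_norm] using real_inner_le_norm _ _

lemma frob_eq_frobNorm_mul_iff {A B : M3} :
    frob A B = frobNorm A * frobNorm B ↔ frobNorm B • A = frobNorm A • B := by
  simp only [frob_eq_inner, frobNorm_eq_norm, inner_eq_norm_mul_iff_real, ← map_smul,
    flatten_injective.eq_iff]

lemma trace_dev (A : M3) : (dev A).trace = 0 := by
  simp [dev, trace_sub, trace_smul]

lemma dev_add_of_trace_eq_zero (A : M3) {B : M3} (hB : B.trace = 0) : dev (A + B) = dev A + B := by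
  simp only [dev, trace_add, hB, add_zero]
  abel

/-- `(εdot, ηdot) ∈ N_K(SE, g)` for the yield set `K = {(S, g') : ‖dev S‖ + g' ≤ σ₀, g' ≤ 0}`. -/
def InYieldNormalCone (σ₀ : ℝ) (SE : M3) (g : ℝ) (εdot : M3) (ηdot : ℝ) : Prop :=
  ∀ (S : M3) (g' : ℝ), frobNorm (dev S) + g' ≤ σ₀ → g' ≤ 0 →
    frob εdot (S - SE) + ηdot * (g' - g) ≤ 0

namespace InYieldNormalCone

variable {σ₀ g ηdot : ℝ} {SE εdot : M3}

lemma frob_add_mul_sub_nonpos (h : InYieldNormalCone σ₀ SE g εdot ηdot) {A : M3} (hA : A.trace = 0)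
    {g' : ℝ} (hK : frobNorm (dev SE + A) + g' ≤ σ₀) (hg' : g' ≤ 0) :
    frob εdot A + ηdot * (g' - g) ≤ 0 := by
  simpa using h (SE + A) g' (by rwa [dev_add_of_trace_eq_zero SE hA]) hg'

/-- The test point is `(SE + t • dev SE, g - t ‖dev SE‖)`, on the same face of `K`. -/
lemma mul_frob_sub_mul_nonpos (h : InYieldNormalCone σ₀ SE g εdot ηdot)
    (hbdry : frobNorm (dev SE) + g = σ₀) {t : ℝ} (ht : -1 ≤ t)
    (hg' : g - t * frobNorm (dev SE) ≤ 0) :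
    t * (frob εdot (dev SE) - ηdot * frobNorm (dev SE)) ≤ 0 := by
  have hK : frobNorm (dev SE + t • dev SE) + (g - t * frobNorm (dev SE)) ≤ σ₀ := by
    rw [show dev SE + t • dev SE = (1 + t) • dev SE by module, frobNorm_smul,
      abs_of_nonneg (by linarith)]
    linarith
  have := h.frob_add_mul_sub_nonpos (by rw [trace_smul, trace_dev, smul_zero]) hK hg'
  rw [frob_smul_right] at this
  linarith

lemma mul_frobNorm_eq (h : InYieldNormalCone σ₀ SE g εdot ηdot) (hσ₀ : 0 ≤ σ₀)
    (hbdry : frobNorm (dev SE) + g = σ₀) (hg : g < 0) :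
    ηdot * frobNorm (dev SE) = frob εdot (dev SE) := by
  set r := frobNorm (dev SE)
  have hr : 0 < r := by linarith
  have hout := h.mul_frob_sub_mul_nonpos hbdry (t := 1) (by norm_num) (by linarith)
  -- `t = g / r < 0` is the inward step that brings `g'` up to `0`
  have hin := h.mul_frob_sub_mul_nonpos hbdry (t := g / r)
    (by rw [le_div_iff₀ hr]; linarith) (by rw [div_mul_cancel₀ g hr.ne']; linarith)
  have hneg : g / r < 0 := div_neg_of_neg_of_pos hg hr
  nlinarith

lemma frobNorm_mul_le_frob (h : InYieldNormalCone σ₀ SE g εdot ηdot) (hεtr : εdot.trace = 0)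
    (hbdry : frobNorm (dev SE) + g = σ₀) (hg : g < 0) :
    frobNorm εdot * frobNorm (dev SE) ≤ frob εdot (dev SE) := by
  set r := frobNorm (dev SE)
  set c := r / frobNorm εdot
  have hc : 0 ≤ c := div_nonneg (frobNorm_nonneg _) (frobNorm_nonneg _)
  -- `c • εdot` has norm `r` and points along `εdot`; when `εdot = 0`, `c = 0` by `x / 0 = 0`
  have hcε : c * frobNorm εdot ≤ r ∧ c * frobNorm εdot ^ 2 = frobNorm εdot * r := by
    rcases (frobNorm_nonneg εdot).eq_or_lt with h0 | hpos
    · simpa [c, ← h0] using frobNorm_nonneg (dev SE)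
    · have hcr : c * frobNorm εdot = r := div_mul_cancel₀ _ hpos.ne'
      exact ⟨hcr.le, by rw [sq, ← mul_assoc, hcr, mul_comm]⟩
  have hK : frobNorm (dev SE + (c • εdot - dev SE)) + g ≤ σ₀ := by
    rw [add_sub_cancel, frobNorm_smul, abs_of_nonneg hc]
    linarith
  have := h.frob_add_mul_sub_nonpos (by rw [trace_sub, trace_smul, hεtr, trace_dev, smul_zero, sub_zero]) hK
    hg.le
  rw [frob_sub_right, frob_smul_right, frob_self] at this
  linarith

end InYieldNormalCone

theorem stmt_14_general (σ₀ : ℝ) (hσ₀ : 0 < σ₀) (SE : M3) (g : ℝ)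
    (hbdry : frobNorm (dev SE) + g = σ₀) (hg : g < 0)
    (εdot : M3) (hεtr : εdot.trace = 0) (ηdot : ℝ)
    (hNC : ∀ (S : M3) (g' : ℝ), frobNorm (dev S) + g' ≤ σ₀ → g' ≤ 0 →
      frob εdot (S - SE) + ηdot * (g' - g) ≤ 0) :
    ∃ lam : ℝ, 0 ≤ lam ∧ εdot = (lam / frobNorm (dev SE)) • dev SE ∧
      ηdot = lam ∧ lam = frobNorm εdot := by
  have hN : InYieldNormalCone σ₀ SE g εdot ηdot := hNC
  have hr : 0 < frobNorm (dev SE) := by linarith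
  have hCS : frob εdot (dev SE) = frobNorm εdot * frobNorm (dev SE) :=
    (frob_le_frobNorm_mul _ _).antisymm (hN.frobNorm_mul_le_frob hεtr hbdry hg)
  have hη : ηdot = frobNorm εdot :=
    mul_right_cancel₀ hr.ne' (by rw [hN.mul_frobNorm_eq hσ₀.le hbdry hg, hCS])
  refine ⟨frobNorm εdot, frobNorm_nonneg _, ?_, hη, rfl⟩
  rw [div_eq_inv_mul, mul_smul, ← frob_eq_frobNorm_mul_iff.mp hCS, inv_smul_smul₀ hr.ne']

theorem stmt_14 (σ₀ : ℝ) (hσ₀ : 0 < σ₀) (SE : M3) (g : ℝ)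
    (hdev : dev SE ≠ 0) (hbdry : frobNorm (dev SE) + g = σ₀) (hg : g < 0)
    (εdot : M3) (hεsym : εdotᵀ = εdot) (hεtr : εdot.trace = 0) (ηdot : ℝ)
    (hNC : ∀ (S : M3) (g' : ℝ), frobNorm (dev S) + g' ≤ σ₀ → g' ≤ 0 →
      frob εdot (S - SE) + ηdot * (g' - g) ≤ 0) :
    ∃ lam : ℝ, 0 ≤ lam ∧ εdot = (lam / frobNorm (dev SE)) • dev SE ∧
      ηdot = lam ∧ lam = frobNorm εdot :=
  stmt_14_general σ₀ hσ₀ SE g hbdry hg εdot hεtr ηdot hNC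
end
end
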